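/- Assume Γ is the path graph on {1,…,r}. Then every face F of the BFZ quiver Q^{u,e} belongs to the Jacobian ideal of the superpotential: the cyclic monomial w_F traversing F is cyclically equivalent to an element of J(S), where S = Σ_F ε(F)·w_F. -/

import Mathlib

/-!  Berenstein–Fomin–Zelevinsky quivers `Q^{u,e}` as combinatorial data.

`r` is the number of nodes of the Dynkin diagram `Γ` (a finite simple graph whose
relevant nodes are `1, …, r`), `n` is the length of the reduced word
`i = (i_1, …, i_n)` for the Weyl group element `u` (and `v = e`, so every letter has
sign `-1`), `node k = i_k` is the node of the letter at position `k` (extended by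
`node (-p) = p` for `p = 1, …, r`), and `succ k = k⁺` is the successor map. -/
structure BFZe where
  r : ℤ
  n : ℤ
  Γ : SimpleGraph ℤ
  node : ℤ → ℤ
  succ : ℤ → ℤ

namespace BFZe

variable (S : BFZe)

/-- The index (vertex) set `[-r, -1] ∪ [1, n]`. -/
def Idx (k : ℤ) : Prop := (-S.r ≤ k ∧ k ≤ -1) ∨ (1 ≤ k ∧ k ≤ S.n)

/-- The axioms on the data: `r ≥ 1`, `node (-p) = p`, the nodes of the letters lie in
`{1, …, r}`, and `succ k` is the least index `l > k` with `node l = node k`, or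
`n + 1` if there is no such index. -/
def Valid : Prop :=
  1 ≤ S.r ∧ 0 ≤ S.n ∧
  (∀ p : ℤ, 1 ≤ p → p ≤ S.r → S.node (-p) = p) ∧
  (∀ k : ℤ, 1 ≤ k → k ≤ S.n → 1 ≤ S.node k ∧ S.node k ≤ S.r) ∧
  (∀ k : ℤ, S.Idx k →
    k < S.succ k ∧ S.succ k ≤ S.n + 1 ∧
    (S.succ k ≤ S.n → S.Idx (S.succ k) ∧ S.node (S.succ k) = S.node k) ∧
    (∀ l : ℤ, S.Idx l → k < l → S.node l = S.node k → S.succ k ≤ l))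

open scoped Classical in
/-- The Coxeter matrix of the Weyl group of the symmetric Kac–Moody algebra with
Dynkin diagram `Γ`:  `m_{ab} = 3` if `a` and `b` are adjacent in `Γ` and `m_{ab} = 2`
otherwise (for `a ≠ b`). -/
noncomputable def coxeterMatrix : CoxeterMatrix ℤ where
  M := Matrix.of fun a b : ℤ => if a = b then 1 else if S.Γ.Adj a b then 3 else 2
  isSymm := by
    rw [Matrix.IsSymm]
    ext a b
    by_cases h : a = b
    · simp [h]
    · simp only [Matrix.transpose_apply, Matrix.of_apply, if_neg h, if_neg (Ne.symm h)]
      rw [S.Γ.adj_comm]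
  diagonal := by intro b; simp
  off_diagonal := by
    intro a b h
    simp only [Matrix.of_apply, if_neg h]
    split <;> omega

/-- The word `(i_1, …, i_n)`, as a list of nodes of `Γ`. -/
def word : List ℤ := (List.range S.n.toNat).map (fun j => S.node ((j : ℤ) + 1))

/-- The word `i` is a reduced word (for the Weyl group element `u`) in the Weyl
(Coxeter) group associated to `Γ`. -/
noncomputable def Reduced : Prop :=
  (CoxeterMatrix.toCoxeterSystem S.coxeterMatrix).IsReduced S.word

/-- There is a horizontal arrow from `x` to `y`:  these are the arrows `k⁺ → k` for
`k` in the index set with `k⁺ ≤ n`. -/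
def HorArrow (x y : ℤ) : Prop := S.Idx y ∧ x = S.succ y ∧ x ≤ S.n

/-- There is an inclined arrow from `x` to `y`:  these are the arrows `k → l` with
`|i_k|` and `|i_l|` adjacent in `Γ` and `k < l < k⁺ < l⁺`. -/
def InclArrow (x y : ℤ) : Prop :=
  S.Idx x ∧ S.Idx y ∧ S.Γ.Adj (S.node x) (S.node y) ∧
  x < y ∧ y < S.succ x ∧ S.succ x < S.succ y

/-- The arrows of the BFZ quiver `Q^{u,e}`. -/
def Arrow (x y : ℤ) : Prop := S.HorArrow x y ∨ S.InclArrow x y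

/-- A face of `Q^{u,e}`: a chordless cycle `c : ZMod N → ℤ` (with `N ≥ 3`) of the
underlying undirected graph, i.e. consecutive vertices are joined by an arrow and no
arrow of `Q^{u,e}` joins two non-consecutive vertices. -/
def IsFace {N : ℕ} (c : ZMod N → ℤ) : Prop :=
  3 ≤ N ∧ Function.Injective c ∧
  (∀ t : ZMod N, S.Arrow (c t) (c (t + 1)) ∨ S.Arrow (c (t + 1)) (c t)) ∧
  (∀ s t : ZMod N, s ≠ t → t ≠ s + 1 → s ≠ t + 1 → ¬ S.Arrow (c s) (c t))

/-- `Γ` is the path graph (type `A_r` Dynkin diagram) on `{1, …, r}`. -/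
def IsPathGraph : Prop :=
  ∀ a b : ℤ, S.Γ.Adj a b ↔
    (1 ≤ a ∧ 1 ≤ b ∧ a ≤ S.r ∧ b ≤ S.r ∧ (b = a + 1 ∨ a = b + 1))

/-- The type of arrows of the quiver `Q^{u,e}`. -/
def Arr : Type := { p : ℤ × ℤ // S.Arrow p.1 p.2 }

/-- The source vertex of an arrow. -/
def asrc (e : S.Arr) : ℤ := e.1.1

/-- The target vertex of an arrow. -/
def atgt (e : S.Arr) : ℤ := e.1.2

/-- The product in the free associative `ℂ`-algebra on the arrows corresponding to a
list of arrows (the monomial of a path). -/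
noncomputable def pathProd (L : List S.Arr) : FreeAlgebra ℂ S.Arr :=
  (L.map (FreeAlgebra.ι ℂ)).prod

/-- A list of arrows is a path: consecutive arrows are composable. -/
def IsPathList (L : List S.Arr) : Prop :=
  L.Chain' (fun e f => S.atgt e = S.asrc f)

/-- A nonempty composable list of arrows closing up to a cycle; its monomial
`e_1 ⋯ e_N` is a cyclic monomial. -/
def IsCycList (L : List S.Arr) : Prop :=
  L ≠ [] ∧ S.IsPathList L ∧
  ∀ e ∈ L.head?, ∀ f ∈ L.getLast?, S.atgt f = S.asrc e

/-- The linear span of all `w - rot w` for cyclic monomials `w`; two elements of the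
free algebra are cyclically equivalent iff their difference lies in this span. -/
noncomputable def cycSpan : Submodule ℂ (FreeAlgebra ℂ S.Arr) :=
  Submodule.span ℂ
    {x | ∃ L : List S.Arr, S.IsCycList L ∧ x = S.pathProd L - S.pathProd (L.rotate 1)}

open scoped Classical in
/-- The cyclic derivative with respect to the arrow `a` of the cyclic monomial given
by the list `L = e_1 ⋯ e_N`:  `∑_{j : e_j = a} e_{j+1} ⋯ e_N e_1 ⋯ e_{j-1}`. -/
noncomputable def cycDeriv (a : S.Arr) (L : List S.Arr) : FreeAlgebra ℂ S.Arr :=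
  ∑ j ∈ Finset.range L.length,
    if L[j]? = some a then S.pathProd (L.drop (j + 1) ++ L.take j) else 0

/-- A face of `Q^{u,e}` as a directed cyclic list of arrows: a directed cycle visiting
no vertex twice such that any arrow of `Q^{u,e}` joining two of its vertices is one of
the (cyclically consecutive) arrows of the cycle, i.e. the cycle is chordless in the
underlying undirected graph. -/
def IsFaceList (L : List S.Arr) : Prop :=
  S.IsCycList L ∧ (L.map S.asrc).Nodup ∧
  ∀ x y : ℤ, x ∈ L.map S.asrc → y ∈ L.map S.asrc → S.Arrow x y →
    ∃ e ∈ L, S.asrc e = x ∧ S.atgt e = y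

/-- `FS` is a complete set of representatives of the faces of `Q^{u,e}`, each face
being listed exactly once up to rotation. -/
def FaceReps (FS : Finset (List S.Arr)) : Prop :=
  (∀ L ∈ FS, S.IsFaceList L) ∧
  (∀ L : List S.Arr, S.IsFaceList L → ∃ L' ∈ FS, ∃ j : ℕ, L.rotate j = L') ∧
  (∀ L ∈ FS, ∀ L' ∈ FS, (∃ j : ℕ, L.rotate j = L') → L = L')

/-- The cyclic derivative with respect to the arrow `a` of the potential
`∑_L eps L • w_L`, `L` ranging over the face representatives `FS`. -/
noncomputable def potDeriv (FS : Finset (List S.Arr)) (eps : List S.Arr → ℂ)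
    (a : S.Arr) : FreeAlgebra ℂ S.Arr :=
  ∑ L ∈ FS, eps L • S.cycDeriv a L

/-- The Jacobian ideal of the potential `∑_L eps L • w_L`: the two-sided ideal
generated by its cyclic derivatives. -/
noncomputable def jacIdeal (FS : Finset (List S.Arr)) (eps : List S.Arr → ℂ) :
    Submodule ℂ (FreeAlgebra ℂ S.Arr) :=
  Submodule.span ℂ
    {x | ∃ (p q : FreeAlgebra ℂ S.Arr) (a : S.Arr), x = p * S.potDeriv FS eps a * q}

/-- The quiver with potential `(Q^{u,e}, ∑_L eps L • w_L)` is rigid: every cyclic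
monomial is cyclically equivalent to an element of the Jacobian ideal. -/
def IsRigid (FS : Finset (List S.Arr)) (eps : List S.Arr → ℂ) : Prop :=
  ∀ L : List S.Arr, S.IsCycList L →
    ∃ y ∈ S.jacIdeal FS eps, S.pathProd L - y ∈ S.cycSpan

/-- The data describing the faces of `Q^{u,e}` in the path-graph (type A) case:
`aF L` is the node of the string containing all but one vertex of the face `L`, and
`bF L` is the node of the string containing the remaining lone vertex. -/
def FaceNodes (FS : Finset (List S.Arr)) (aF bF : List S.Arr → ℤ) : Prop :=
  ∀ L ∈ FS,
    S.Γ.Adj (aF L) (bF L) ∧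
    (∀ x ∈ L.map S.asrc, S.node x = aF L ∨ S.node x = bF L) ∧
    (∃! x, x ∈ L.map S.asrc ∧ S.node x = bF L)

/-- The orientation sign `ε(F)` of a face: `+1` if `b(F) > a(F)`, `-1` otherwise. -/
noncomputable def faceEps (aF bF : List S.Arr → ℤ) (L : List S.Arr) : ℂ :=
  if aF L < bF L then 1 else -1

/-!
"Cyclically equivalent to an element of `J(S)`" means lying in `J(S) ⊔ C`, `C` the span
of the `w - rot w`. For an arrow `a`, `a · ∂ₐ S` lies in `J(S)` and is cyclically
equivalent to `∑_F ε(F) · #(a in F) · w_F`. Take for `a` the arrow of `F` leaving its lone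
vertex `ℓ(F)`. It is inclined, so it points forward; in any other face `G` through it, its
target is `ℓ(G)`, since a face is determined by one of its arrows together with its two
strings and its lone vertex. Hence `w_F` is a combination of `a · ∂ₐ S` and of monomials
of faces with larger lone vertex, and descending induction on `ℓ(F)` concludes.
-/

theorem _root_.Finset.forall_mem_of_downward_induction {α β : Type*} [LinearOrder β]
    {P : α → Prop} (s : Finset α) (f : α → β)
    (step : ∀ x ∈ s, (∀ y ∈ s, f x < f y → P y) → P x) : ∀ x ∈ s, P x := by
  classical
  suffices ∀ m, ∀ x ∈ s, (s.filter (f x < f ·)).card = m → P x from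
    fun x hx => this _ x hx rfl
  intro m
  induction m using Nat.strong_induction_on with
  | _ m ih =>
    rintro x hx rfl
    refine step x hx fun y hy hxy => ih _ ?_ y hy rfl
    refine Finset.card_lt_card ⟨fun z hz => ?_, fun hsub => ?_⟩
    · simp only [Finset.mem_filter] at hz ⊢
      exact ⟨hz.1, hxy.trans hz.2⟩
    · simpa using (Finset.mem_filter.mp (hsub (Finset.mem_filter.mpr ⟨hy, hxy⟩))).2

open scoped Classical in
theorem _root_.List.sum_range_ite_getElem?_eq_count_nsmul {α M : Type*} [AddCommMonoid M]
    (L : List α) (a : α) (x : M) :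
    (∑ j ∈ Finset.range L.length, if L[j]? = some a then x else 0) = L.count a • x := by
  induction L with
  | nil => simp
  | cons b L ih =>
    rw [List.length_cons, Finset.sum_range_succ', List.count_cons]
    simp only [List.getElem?_cons_succ, ih, List.getElem?_cons_zero, Option.some.injEq, add_nsmul]
    split_ifs <;> simp_all [beq_iff_eq]

section

variable {S}

theorem Valid.lt_succ (hS : S.Valid) {k : ℤ} (hk : S.Idx k) : k < S.succ k :=
  (hS.2.2.2.2 k hk).1

theorem Valid.node_succ (hS : S.Valid) {k : ℤ} (hk : S.Idx k) (hkn : S.succ k ≤ S.n) :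
    S.node (S.succ k) = S.node k :=
  ((hS.2.2.2.2 k hk).2.2.1 hkn).2

theorem Valid.succ_le (hS : S.Valid) {k l : ℤ} (hk : S.Idx k) (hl : S.Idx l) (hkl : k < l)
    (hnode : S.node l = S.node k) : S.succ k ≤ l :=
  (hS.2.2.2.2 k hk).2.2.2 l hl hkl hnode

theorem HorArrow.node_eq (hS : S.Valid) {x y : ℤ} (h : S.HorArrow x y) :
    S.node x = S.node y := by
  obtain ⟨hy, rfl, hxn⟩ := h
  exact hS.node_succ hy hxn

theorem HorArrow.right_unique (hS : S.Valid) {x y y' : ℤ} (h : S.HorArrow x y)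
    (h' : S.HorArrow x y') : y = y' := by
  have hnode : S.node y' = S.node y := (h'.node_eq hS).symm.trans (h.node_eq hS)
  obtain ⟨hy, rfl, -⟩ := h
  obtain ⟨hy', hsucc, -⟩ := h'
  have := hS.lt_succ hy
  have := hS.lt_succ hy'
  rcases lt_trichotomy y y' with hlt | heq | hlt
  · have := hS.succ_le hy hy' hlt hnode; omega
  · exact heq
  · have := hS.succ_le hy' hy hlt hnode.symm; omega

theorem InclArrow.right_unique (hS : S.Valid) {x y y' : ℤ} (h : S.InclArrow x y)
    (h' : S.InclArrow x y') (hnode : S.node y = S.node y') : y = y' := by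
  obtain ⟨-, hy, -, -, hy_lt, hsucc⟩ := h
  obtain ⟨-, hy', -, -, hy'_lt, hsucc'⟩ := h'
  rcases lt_trichotomy y y' with hlt | heq | hlt
  · have := hS.succ_le hy hy' hlt hnode.symm; omega
  · exact heq
  · have := hS.succ_le hy' hy hlt hnode; omega

theorem Arrow.ne (hS : S.Valid) {x y : ℤ} (h : S.Arrow x y) : x ≠ y := by
  rcases h with ⟨hy, rfl, -⟩ | ⟨-, -, -, hlt, -⟩
  · exact (hS.lt_succ hy).ne'
  · exact hlt.ne

theorem Arrow.lt_of_node_ne (hS : S.Valid) {x y : ℤ} (h : S.Arrow x y)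
    (hne : S.node x ≠ S.node y) : x < y := by
  rcases h with h | ⟨-, -, -, hlt, -⟩
  · exact absurd (h.node_eq hS) hne
  · exact hlt

theorem IsPathList.atgt_getElem {L : List S.Arr} (h : S.IsPathList L) {i : ℕ}
    (hi : i + 1 < L.length) :
    S.atgt L[i] = S.asrc L[i + 1] := by
  simpa using List.isChain_iff_getElem.mp h i hi

theorem IsCycList.atgt_getElem_last {L : List S.Arr} (h : S.IsCycList L) {k : ℕ}
    (hk : L.length = k + 1) :
    S.atgt (L[k]'(by omega)) = S.asrc (L[0]'(by omega)) := by
  obtain ⟨hne, -, hwrap⟩ := h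
  have := hwrap _ (List.head?_eq_some_head hne) _ (List.getLast?_eq_getLast_of_ne_nil hne)
  simpa [List.getLast_eq_getElem, hk, List.head_eq_getElem_zero hne] using this

theorem IsCycList.atgt_mem {L : List S.Arr} (h : S.IsCycList L) {e : S.Arr} (he : e ∈ L) :
    S.atgt e ∈ L.map S.asrc := by
  obtain ⟨i, hi, rfl⟩ := List.mem_iff_getElem.mp he
  by_cases hi1 : i + 1 < L.length
  · rw [h.2.1.atgt_getElem hi1]
    exact List.mem_map_of_mem (List.getElem_mem _)
  · rw [h.atgt_getElem_last (by omega : L.length = i + 1)]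
    exact List.mem_map_of_mem (List.getElem_mem _)

theorem IsCycList.rotate_one {L : List S.Arr} (h : S.IsCycList L) :
    S.IsCycList (L.rotate 1) := by
  obtain ⟨hne, hch, hwrap⟩ := h
  obtain ⟨x, t, rfl⟩ := List.exists_cons_of_ne_nil hne
  rw [List.rotate_cons_succ, List.rotate_zero]
  rcases eq_or_ne t [] with rfl | htne
  · exact ⟨by simp, List.isChain_singleton _, by simpa using hwrap⟩
  refine ⟨by simp, ?_, ?_⟩
  · refine List.isChain_append.mpr ⟨(List.isChain_cons.mp hch).2, List.isChain_singleton _, ?_⟩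
    intro a ha y hy
    obtain rfl : x = y := by simpa using hy
    exact hwrap x rfl a (by rw [List.getLast?_cons, ha]; simp)
  · intro e he f hf
    rw [List.head?_append_of_ne_nil _ htne] at he
    obtain rfl : x = f := by simpa using hf
    exact (List.isChain_cons.mp hch).1 e he

theorem IsCycList.rotate {L : List S.Arr} (h : S.IsCycList L) (j : ℕ) :
    S.IsCycList (L.rotate j) := by
  induction j with
  | zero => simpa using h
  | succ n ih => simpa [List.rotate_rotate] using ih.rotate_one

theorem IsCycList.pathProd_sub_rotate_mem {L : List S.Arr} (h : S.IsCycList L) (j : ℕ) :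
    S.pathProd L - S.pathProd (L.rotate j) ∈ S.cycSpan := by
  induction j with
  | zero => simp
  | succ n ih =>
    have hstep : S.pathProd (L.rotate n) - S.pathProd ((L.rotate n).rotate 1) ∈ S.cycSpan :=
      Submodule.subset_span ⟨L.rotate n, h.rotate n, rfl⟩
    rw [List.rotate_rotate] at hstep
    simpa using add_mem ih hstep

open scoped Classical in
theorem mul_cycDeriv (L : List S.Arr) (a : S.Arr) :
    FreeAlgebra.ι ℂ a * S.cycDeriv a L =
      ∑ j ∈ Finset.range L.length,
        if L[j]? = some a then S.pathProd (L.rotate j) else 0 := by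
  rw [cycDeriv, Finset.mul_sum]
  refine Finset.sum_congr rfl fun j hj => ?_
  split_ifs with hja
  · have hj : j < L.length := Finset.mem_range.mp hj
    obtain rfl : L[j] = a := by simpa [List.getElem?_eq_getElem hj] using hja
    rw [List.rotate_eq_drop_append_take hj.le, ← List.getElem_cons_drop hj]
    simp only [pathProd, List.cons_append, List.map_cons, List.prod_cons]
  · rw [mul_zero]

open scoped Classical in
theorem IsCycList.mul_cycDeriv_sub_mem {L : List S.Arr} (h : S.IsCycList L) (a : S.Arr) :
    FreeAlgebra.ι ℂ a * S.cycDeriv a L - (L.count a : ℂ) • S.pathProd L ∈ S.cycSpan := by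
  rw [Nat.cast_smul_eq_nsmul, ← List.sum_range_ite_getElem?_eq_count_nsmul, mul_cycDeriv,
    ← Finset.sum_sub_distrib]
  refine Submodule.sum_mem _ fun j _ => ?_
  split_ifs
  · simpa using neg_mem (h.pathProd_sub_rotate_mem j)
  · simp

open scoped Classical in
theorem sum_count_smul_pathProd_mem_jacIdeal_sup_cycSpan {FS : Finset (List S.Arr)}
    (hFS : ∀ L ∈ FS, S.IsCycList L) (eps : List S.Arr → ℂ) (a : S.Arr) :
    ∑ L ∈ FS, (eps L * L.count a) • S.pathProd L ∈ S.jacIdeal FS eps ⊔ S.cycSpan := by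
  have hjac : FreeAlgebra.ι ℂ a * S.potDeriv FS eps a ∈ S.jacIdeal FS eps :=
    Submodule.subset_span ⟨FreeAlgebra.ι ℂ a, 1, a, by rw [mul_one]⟩
  have hcyc : FreeAlgebra.ι ℂ a * S.potDeriv FS eps a -
      ∑ L ∈ FS, (eps L * L.count a) • S.pathProd L ∈ S.cycSpan := by
    rw [potDeriv, Finset.mul_sum, ← Finset.sum_sub_distrib]
    refine Submodule.sum_mem _ fun L hL => ?_
    rw [mul_smul_comm, mul_smul, ← smul_sub]
    exact Submodule.smul_mem _ _ ((hFS L hL).mul_cycDeriv_sub_mem a)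
  simpa using sub_mem (Submodule.mem_sup_left hjac) (Submodule.mem_sup_right hcyc)

theorem IsCycList.getElem_eq_of_forall_asrc_eq {A B : List S.Arr} (hA : S.IsCycList A)
    (hB : S.IsCycList B) (hdet : ∀ e ∈ A, ∀ f ∈ B, S.asrc e = S.asrc f → e = f)
    (hhead : A.head? = B.head?) :
    ∀ i (hiA : i < A.length) (hiB : i < B.length), A[i] = B[i] := by
  intro i
  induction i with
  | zero =>
    intro hiA hiB
    simpa [List.head?_eq_getElem?, List.getElem?_eq_getElem hiA,
      List.getElem?_eq_getElem hiB] using hhead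
  | succ k ih =>
    intro hiA hiB
    refine hdet _ (List.getElem_mem _) _ (List.getElem_mem _) ?_
    rw [← hA.2.1.atgt_getElem hiA, ← hB.2.1.atgt_getElem hiB, ih]

/-- Once `A` has closed up, `B` is back at its first vertex, so it closes up as well. -/
theorem IsCycList.length_le_of_getElem_eq {A B : List S.Arr} (hA : S.IsCycList A)
    (hB : S.IsCycList B) (hBnodup : (B.map S.asrc).Nodup)
    (hAB : ∀ i (hiA : i < A.length) (hiB : i < B.length), A[i] = B[i]) :
    B.length ≤ A.length := by
  by_contra! hlt
  obtain ⟨k, hk⟩ : ∃ k, A.length = k + 1 :=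
    Nat.exists_eq_add_one.mpr (List.length_pos_iff.mpr hA.1)
  have hBpos : 0 < B.length := by omega
  have hsrc : S.asrc (B[k + 1]'(by omega)) = S.asrc (B[0]'hBpos) := by
    rw [← hB.2.1.atgt_getElem (by omega), ← hAB k (by omega), hA.atgt_getElem_last hk,
      hAB 0 (by omega)]
  have : k + 1 = 0 := (hBnodup.getElem_inj_iff (i := k + 1) (j := 0)
    (hi := by simp only [List.length_map]; omega) (hj := by simpa using hBpos)).mp
    (by rwa [List.getElem_map, List.getElem_map])
  omega

theorem IsCycList.eq_of_forall_asrc_eq {A B : List S.Arr} (hA : S.IsCycList A)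
    (hB : S.IsCycList B) (hAnodup : (A.map S.asrc).Nodup) (hBnodup : (B.map S.asrc).Nodup)
    (hdet : ∀ e ∈ A, ∀ f ∈ B, S.asrc e = S.asrc f → e = f) (hhead : A.head? = B.head?) :
    A = B := by
  have hAB := hA.getElem_eq_of_forall_asrc_eq hB hdet hhead
  have hBA : ∀ i (hiB : i < B.length) (hiA : i < A.length), B[i] = A[i] :=
    fun i hiB hiA => (hAB i hiA hiB).symm
  exact List.ext_getElem (le_antisymm (hB.length_le_of_getElem_eq hA hAnodup hBA)
    (hA.length_le_of_getElem_eq hB hBnodup hAB)) hAB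

variable (S) in
structure IsLoneFace (L : List S.Arr) (a b ℓ : ℤ) : Prop where
  isFaceList : S.IsFaceList L
  ne : a ≠ b
  node_mem : ∀ x ∈ L.map S.asrc, S.node x = a ∨ S.node x = b
  lone_mem : ℓ ∈ L.map S.asrc
  node_lone : S.node ℓ = b
  eq_lone : ∀ x ∈ L.map S.asrc, S.node x = b → x = ℓ

theorem FaceNodes.isLoneFace {FS : Finset (List S.Arr)} {aF bF : List S.Arr → ℤ}
    (hFS : S.FaceReps FS) (hab : S.FaceNodes FS aF bF) {L : List S.Arr} (hL : L ∈ FS)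
    {ℓ : ℤ} (hℓ : ℓ ∈ L.map S.asrc) (hℓb : S.node ℓ = bF L) :
    S.IsLoneFace L (aF L) (bF L) ℓ where
  isFaceList := hFS.1 L hL
  ne := (hab L hL).1.ne
  node_mem := (hab L hL).2.1
  lone_mem := hℓ
  node_lone := hℓb
  eq_lone _ hx hxb := (hab L hL).2.2.unique ⟨hx, hxb⟩ ⟨hℓ, hℓb⟩

/-- The inclined arrow would be a chord of `L`. -/
theorem IsLoneFace.not_inclArrow_of_horArrow (hS : S.Valid) {L M : List S.Arr} {a b ℓ : ℤ}
    (hL : S.IsLoneFace L a b ℓ) (hM : S.IsLoneFace M a b ℓ) {e f : S.Arr} (he : e ∈ L)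
    (hf : f ∈ M) (hsrc : S.asrc e = S.asrc f) (hhor : S.HorArrow (S.asrc e) (S.atgt e)) :
    ¬ S.InclArrow (S.asrc f) (S.atgt f) := by
  intro hincl
  have hxL : S.asrc e ∈ L.map S.asrc := List.mem_map_of_mem he
  have hyL := hL.isFaceList.1.atgt_mem he
  have hzM := hM.isFaceList.1.atgt_mem hf
  have hnode_e := hhor.node_eq hS
  have hnode_f : S.node (S.asrc f) ≠ S.node (S.atgt f) := hincl.2.2.1.ne
  rcases hL.node_mem _ hxL with hxa | hxb
  · have hz : S.atgt f = ℓ := hM.eq_lone _ hzM (by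
      rcases hM.node_mem _ hzM with h | h
      · exact absurd (by rw [← hsrc, hxa, h]) hnode_f
      · exact h)
    obtain ⟨g, hg, hgsrc, hgtgt⟩ := hL.isFaceList.2.2 _ ℓ hxL hL.lone_mem
      (by rw [hsrc, ← hz]; exact f.2)
    obtain rfl : g = e := (List.inj_on_of_nodup_map hL.isFaceList.2.1) hg he hgsrc
    exact hL.ne (by rw [← hxa, hnode_e, hgtgt, hL.node_lone])
  · have hx := hL.eq_lone _ hxL hxb
    have hy := hL.eq_lone _ hyL (by rw [← hnode_e, hxb])
    exact Arrow.ne hS e.2 (hx.trans hy.symm)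

theorem IsLoneFace.eq_of_asrc_eq (hS : S.Valid) {L M : List S.Arr} {a b ℓ : ℤ}
    (hL : S.IsLoneFace L a b ℓ) (hM : S.IsLoneFace M a b ℓ) {e f : S.Arr} (he : e ∈ L)
    (hf : f ∈ M) (hsrc : S.asrc e = S.asrc f) : e = f := by
  have harr : ∀ g : S.Arr, S.Arrow (S.asrc g) (S.atgt g) := fun g => g.2
  refine Subtype.ext (Prod.ext hsrc ?_)
  change S.atgt e = S.atgt f
  rcases harr e with he_hor | he_incl <;> rcases harr f with hf_hor | hf_incl
  · exact he_hor.right_unique hS (hsrc ▸ hf_hor)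
  · exact absurd hf_incl (hL.not_inclArrow_of_horArrow hS hM he hf hsrc he_hor)
  · exact absurd he_incl (hM.not_inclArrow_of_horArrow hS hL hf he hsrc.symm hf_hor)
  · refine he_incl.right_unique hS (hsrc ▸ hf_incl) ?_
    have hne_e : S.node (S.asrc e) ≠ S.node (S.atgt e) := he_incl.2.2.1.ne
    have hne_f : S.node (S.asrc f) ≠ S.node (S.atgt f) := hf_incl.2.2.1.ne
    have hx := hL.node_mem _ (List.mem_map_of_mem he)
    have hy := hL.node_mem _ (hL.isFaceList.1.atgt_mem he)
    have hz := hM.node_mem _ (hM.isFaceList.1.atgt_mem hf)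
    rw [hsrc] at hne_e hx
    omega

theorem IsLoneFace.isRotated_of_mem (hS : S.Valid) {L M : List S.Arr} {a b ℓ : ℤ}
    (hL : S.IsLoneFace L a b ℓ) (hM : S.IsLoneFace M a b ℓ) {e : S.Arr} (heL : e ∈ L)
    (heM : e ∈ M) : L ~r M := by
  obtain ⟨i, hi, rfl⟩ := List.mem_iff_getElem.mp heL
  obtain ⟨j, hj, hji⟩ := List.mem_iff_getElem.mp heM
  have hrot : L.rotate i = M.rotate j := by
    refine (hL.isFaceList.1.rotate i).eq_of_forall_asrc_eq (hM.isFaceList.1.rotate j)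
      (by rw [List.map_rotate]; exact List.nodup_rotate.mpr hL.isFaceList.2.1)
      (by rw [List.map_rotate]; exact List.nodup_rotate.mpr hM.isFaceList.2.1)
      (fun e he f hf => hL.eq_of_asrc_eq hS hM (List.mem_rotate.mp he) (List.mem_rotate.mp hf))
      ?_
    rw [List.head?_rotate hi, List.head?_rotate hj, List.getElem?_eq_getElem hi,
      List.getElem?_eq_getElem hj, hji]
  exact (show L ~r L.rotate i from ⟨i, rfl⟩).trans (hrot ▸ List.IsRotated.forall M j)

/-- The arrow leaving the lone vertex `ℓ₀` of `L₀` is inclined and ends on the string of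
`L₀`; in any other face through it, its target is the lone vertex. -/
theorem IsLoneFace.lt_or_isRotated (hS : S.Valid) {L₀ L : List S.Arr} {a₀ b₀ ℓ₀ a b ℓ : ℤ}
    (hL₀ : S.IsLoneFace L₀ a₀ b₀ ℓ₀) (hL : S.IsLoneFace L a b ℓ) {e : S.Arr} (he₀ : e ∈ L₀)
    (hsrc : S.asrc e = ℓ₀) (he : e ∈ L) : ℓ₀ < ℓ ∨ L ~r L₀ := by
  have htgt₀ := hL₀.isFaceList.1.atgt_mem he₀
  have htgtL := hL.isFaceList.1.atgt_mem he
  have htgt_ne : S.atgt e ≠ ℓ₀ := fun h => Arrow.ne hS e.2 (hsrc.trans h.symm)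
  have hnode_tgt : S.node (S.atgt e) = a₀ :=
    (hL₀.node_mem _ htgt₀).resolve_right fun h => htgt_ne (hL₀.eq_lone _ htgt₀ h)
  have hlt : ℓ₀ < S.atgt e := hsrc ▸ Arrow.lt_of_node_ne hS e.2
    (by rw [hsrc, hL₀.node_lone, hnode_tgt]; exact hL₀.ne.symm)
  have hℓ₀L : ℓ₀ ∈ L.map S.asrc := hsrc ▸ List.mem_map_of_mem he
  rcases hL.node_mem _ hℓ₀L with hℓ₀a | hℓ₀b
  · refine Or.inl (hL.eq_lone _ htgtL ((hL.node_mem _ htgtL).resolve_left ?_) ▸ hlt)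
    rw [hnode_tgt, ← hℓ₀a, hL₀.node_lone]
    exact hL₀.ne
  · obtain rfl : ℓ₀ = ℓ := hL.eq_lone _ hℓ₀L hℓ₀b
    obtain rfl : a₀ = a := hnode_tgt.symm.trans
      ((hL.node_mem _ htgtL).resolve_right fun h => htgt_ne (hL.eq_lone _ htgtL h))
    obtain rfl : b₀ = b := hL₀.node_lone.symm.trans hℓ₀b
    exact Or.inr (hL.isRotated_of_mem hS hL₀ he he₀)

theorem pathProd_mem_jacIdeal_sup_cycSpan (hS : S.Valid) {FS : Finset (List S.Arr)}
    (hFS : S.FaceReps FS) {aF bF lone : List S.Arr → ℤ}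
    (hlone : ∀ L ∈ FS, S.IsLoneFace L (aF L) (bF L) (lone L)) {eps : List S.Arr → ℂ}
    (heps : ∀ L ∈ FS, eps L ≠ 0) :
    ∀ L ∈ FS, S.pathProd L ∈ S.jacIdeal FS eps ⊔ S.cycSpan := by
  classical
  refine FS.forall_mem_of_downward_induction lone fun L₀ hL₀ ih => ?_
  obtain ⟨e, he₀, hsrc⟩ := List.mem_map.mp (hlone L₀ hL₀).lone_mem
  have hsum := sum_count_smul_pathProd_mem_jacIdeal_sup_cycSpan (fun L hL => (hFS.1 L hL).1) eps e
  rw [← Finset.add_sum_erase _ _ hL₀] at hsum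
  have hrest : ∑ L ∈ FS.erase L₀, (eps L * L.count e) • S.pathProd L ∈
      S.jacIdeal FS eps ⊔ S.cycSpan := by
    refine Submodule.sum_mem _ fun L hL => ?_
    obtain ⟨hne, hL⟩ := Finset.mem_erase.mp hL
    by_cases he : e ∈ L
    · rcases (hlone L₀ hL₀).lt_or_isRotated hS (hlone L hL) he₀ hsrc he with hlt | hrot
      · exact Submodule.smul_mem _ _ (ih L hL hlt)
      · exact absurd (hFS.2.2 L hL L₀ hL₀ hrot) hne
    · simp [List.count_eq_zero_of_not_mem he]
  refine (Submodule.smul_mem_iff _ ?_).mp ((Submodule.add_mem_iff_left _ hrest).mp hsum)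
  exact mul_ne_zero (heps L₀ hL₀) (Nat.cast_ne_zero.mpr (List.count_pos_iff.mpr he₀).ne')

theorem faceEps_ne_zero (aF bF : List S.Arr → ℤ) (L : List S.Arr) :
    S.faceEps aF bF L ≠ 0 := by
  unfold faceEps
  split <;> norm_num

end

theorem face_mem_jacIdeal (hS : S.Valid)
    (FS : Finset (List S.Arr)) (hFS : S.FaceReps FS)
    (aF bF : List S.Arr → ℤ) (hab : S.FaceNodes FS aF bF) :
    ∀ L : List S.Arr, S.IsFaceList L →
      ∃ y ∈ S.jacIdeal FS (S.faceEps aF bF), S.pathProd L - y ∈ S.cycSpan := by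
  intro L hL
  choose! lone hlone using fun M hM => (hab M hM).2.2.exists
  have hfaces : ∀ M ∈ FS, S.IsLoneFace M (aF M) (bF M) (lone M) :=
    fun M hM => hab.isLoneFace hFS hM (hlone M hM).1 (hlone M hM).2
  obtain ⟨M, hM, j, rfl⟩ := hFS.2.1 L hL
  obtain ⟨y, hy, z, hz, hyz⟩ := Submodule.mem_sup.mp
    (pathProd_mem_jacIdeal_sup_cycSpan hS hFS hfaces (fun M _ => faceEps_ne_zero aF bF M) _ hM)
  refine ⟨y, hy, ?_⟩
  convert add_mem (hL.1.pathProd_sub_rotate_mem j) hz using 1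
  rw [← hyz]
  abel

end BFZe
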